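/- arXiv:1405.6288 — 6 statements merged into one kernel-verified Lean document; each statement's English description precedes it below -/
import Mathlib

section
/- The center of the group U_2 of unitriangular automorphisms of A_2 = K⟨x,y⟩ is exactly the set of automorphisms of the form (x + a, y) with a ∈ K, i.e. Z(U_2) = { φ ∈ U_2 : φ sends x ↦ x + a·1 for some a ∈ K and fixes y }. -/
/- STATEMENT 3: the center of the group U₂ of unitriangular automorphisms of
   A₂ = K⟨x,y⟩ (x = ι K 0, y = ι K 1) consists exactly of the automorphisms
   (x + a, y), a ∈ K.  Membership in U₂ is the predicate `IsU2`, and membership in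
   the center means: lies in U₂ and commutes with every element of U₂. -/

noncomputable section
open FreeAlgebra

abbrev A2 (K : Type) [Field K] := FreeAlgebra K (Fin 2)

/-- φ is a unitriangular automorphism: x ↦ x + f(y), y ↦ y + b·1 with f ∈ K⟨y⟩, b ∈ K. -/
def IsU2 (K : Type) [Field K] (φ : A2 K ≃ₐ[K] A2 K) : Prop :=
  ∃ f ∈ Algebra.adjoin K ({ι K 1} : Set (A2 K)), ∃ b : K,
    φ (ι K 0) = ι K 0 + f ∧ φ (ι K 1) = ι K 1 + algebraMap K (A2 K) b

namespace CenterU2Aux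

open Polynomial

variable {K : Type} [Field K]

lemma aeval_y_inj : Function.Injective (Polynomial.aeval (ι K 1) : K[X] →ₐ[K] A2 K) := by
  have h : (FreeAlgebra.lift K (![0, Polynomial.X] : Fin 2 → K[X])).comp
      (Polynomial.aeval (ι K 1) : K[X] →ₐ[K] A2 K) = AlgHom.id K K[X] := by
    apply Polynomial.algHom_ext
    simp
  intro p q hpq
  have := congrArg (FreeAlgebra.lift K (![0, Polynomial.X] : Fin 2 → K[X])) hpq
  have h1 := AlgHom.congr_fun h p
  have h2 := AlgHom.congr_fun h q
  simp only [AlgHom.coe_comp, Function.comp_apply, AlgHom.id_apply] at h1 h2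
  rw [h1, h2] at this
  exact this

lemma algebraMap_A2_inj : Function.Injective (algebraMap K (A2 K)) := by
  intro a b hab
  have := congrArg (FreeAlgebra.lift K (0 : Fin 2 → K)) hab
  simpa using this

lemma fix_of_mem_adjoin (g : A2 K →ₐ[K] A2 K) (hg : g (ι K 1) = ι K 1)
    {f : A2 K} (hf : f ∈ Algebra.adjoin K ({ι K 1} : Set (A2 K))) : g f = f := by
  rw [Algebra.adjoin_singleton_eq_range_aeval, AlgHom.mem_range] at hf
  obtain ⟨p, rfl⟩ := hf
  rw [← Polynomial.aeval_algHom_apply, hg]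

lemma const_of_comp [CharZero K] (p : K[X]) (h : p.comp (X + C 1) = p) :
    ∃ c : K, p = C c := by
  have key : ∀ n : ℕ, p.eval (n : K) = p.eval 0 := by
    intro n
    induction n with
    | zero => simp
    | succ n ih =>
      have := congrArg (Polynomial.eval (n : K)) h
      rw [Polynomial.eval_comp] at this
      simp only [Polynomial.eval_add, Polynomial.eval_X, Polynomial.eval_C] at this
      rw [← ih, ← this]
      push_cast
      ring_nf
  refine ⟨p.eval 0, ?_⟩
  have hq : p - C (p.eval 0) = 0 := by
    apply Polynomial.eq_zero_of_infinite_isRoot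
    apply Set.Infinite.mono (s := Set.range (Nat.cast : ℕ → K))
    · rintro _ ⟨n, rfl⟩
      simp [Polynomial.IsRoot, key n]
    · exact Set.infinite_range_of_injective Nat.cast_injective
  have := sub_eq_zero.mp hq
  exact this

def psi1 : A2 K ≃ₐ[K] A2 K :=
  AlgEquiv.ofAlgHom (FreeAlgebra.lift K ![ι K 0, ι K 1 + 1])
    (FreeAlgebra.lift K ![ι K 0, ι K 1 - 1])
    (by apply FreeAlgebra.hom_ext; funext i; fin_cases i <;> simp)
    (by apply FreeAlgebra.hom_ext; funext i; fin_cases i <;> simp)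

def psi2 : A2 K ≃ₐ[K] A2 K :=
  AlgEquiv.ofAlgHom (FreeAlgebra.lift K ![ι K 0 + ι K 1, ι K 1])
    (FreeAlgebra.lift K ![ι K 0 - ι K 1, ι K 1])
    (by apply FreeAlgebra.hom_ext; funext i; fin_cases i <;> simp)
    (by apply FreeAlgebra.hom_ext; funext i; fin_cases i <;> simp)

@[simp] lemma psi1_x : (psi1 : A2 K ≃ₐ[K] A2 K) (ι K 0) = ι K 0 := by
  simp [psi1]

@[simp] lemma psi1_y : (psi1 : A2 K ≃ₐ[K] A2 K) (ι K 1) = ι K 1 + 1 := by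
  simp [psi1]

@[simp] lemma psi2_x : (psi2 : A2 K ≃ₐ[K] A2 K) (ι K 0) = ι K 0 + ι K 1 := by
  simp [psi2]

@[simp] lemma psi2_y : (psi2 : A2 K ≃ₐ[K] A2 K) (ι K 1) = ι K 1 := by
  simp [psi2]

lemma isU2_psi1 : IsU2 K psi1 :=
  ⟨0, Subalgebra.zero_mem _, 1, by simp, by simp⟩

lemma isU2_psi2 : IsU2 K psi2 :=
  ⟨ι K 1, Algebra.subset_adjoin rfl, 0, by simp, by simp⟩

end CenterU2Aux

open CenterU2Aux Polynomial

theorem center_U2 (K : Type) [Field K] [CharZero K] (φ : A2 K ≃ₐ[K] A2 K) :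
    (IsU2 K φ ∧ ∀ ψ : A2 K ≃ₐ[K] A2 K, IsU2 K ψ → φ * ψ = ψ * φ) ↔
    ∃ a : K, φ (ι K 0) = ι K 0 + algebraMap K (A2 K) a ∧ φ (ι K 1) = ι K 1 := by
  constructor
  · rintro ⟨⟨f, hf, b, hx, hy⟩, hc⟩
    -- commutation with psi2 gives b = 0
    have eq2 : φ (psi2 (ι K 0)) = psi2 (φ (ι K 0)) := by
      have := hc psi2 isU2_psi2
      exact (AlgEquiv.ext_iff.mp this (ι K 0))
    rw [psi2_x, map_add, hx, hy] at eq2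
    rw [map_add, show (psi2 : A2 K ≃ₐ[K] A2 K) f = f from
      fix_of_mem_adjoin psi2.toAlgHom psi2_y hf, psi2_x] at eq2
    have hb0 : algebraMap K (A2 K) b = 0 := by
      have h : algebraMap K (A2 K) b =
          (ι K 0 + f + (ι K 1 + algebraMap K (A2 K) b)) - (ι K 0 + ι K 1 + f) := by
        abel
      rw [eq2] at h
      rw [h]
      abel
    have hb : b = 0 := algebraMap_A2_inj (by rw [hb0, map_zero])
    -- commutation with psi1 gives f = psi1 f
    have eq1 : φ (psi1 (ι K 0)) = psi1 (φ (ι K 0)) := by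
      have := hc psi1 isU2_psi1
      exact (AlgEquiv.ext_iff.mp this (ι K 0))
    rw [psi1_x, hx, map_add, psi1_x] at eq1
    have hff : f = psi1 f := add_left_cancel eq1
    -- write f as a polynomial in y
    have hf' := hf
    rw [Algebra.adjoin_singleton_eq_range_aeval, AlgHom.mem_range] at hf'
    obtain ⟨p, hp⟩ := hf'
    have hpsi1f : (psi1 : A2 K ≃ₐ[K] A2 K) f = aeval (ι K 1) (p.comp (X + C 1)) := by
      rw [← hp, ← Polynomial.aeval_algHom_apply, psi1_y, Polynomial.aeval_comp]
      congr 1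
      simp
    have hpeq : p = p.comp (X + C 1) := by
      apply aeval_y_inj
      rw [hp, ← hpsi1f, ← hff]
    obtain ⟨c, hcc⟩ := const_of_comp p hpeq.symm
    refine ⟨c, ?_, ?_⟩
    · rw [hx, ← hp, hcc, Polynomial.aeval_C]
    · rw [hy, hb, map_zero, add_zero]
  · rintro ⟨a, hx, hy⟩
    constructor
    · exact ⟨algebraMap K (A2 K) a, Subalgebra.algebraMap_mem _ a, 0, by simp [hx], by simp [hy]⟩
    · intro ψ ⟨f, hf, b, hψx, hψy⟩
      have key : φ.toAlgHom.comp ψ.toAlgHom = ψ.toAlgHom.comp φ.toAlgHom := by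
        apply FreeAlgebra.hom_ext
        funext i
        fin_cases i
        · show φ (ψ (ι K 0)) = ψ (φ (ι K 0))
          rw [hψx, hx, map_add, map_add, hx,
            show φ f = f from fix_of_mem_adjoin φ.toAlgHom hy hf,
            hψx, AlgEquiv.commutes]
          abel
        · show φ (ψ (ι K 1)) = ψ (φ (ι K 1))
          rw [hψy, hy, map_add, hy, AlgEquiv.commutes, hψy]
      ext z
      have := AlgHom.congr_fun key z
      simpa [AlgEquiv.mul_apply] using this
end
end

section
/- Let φ = (x + f(y), y) ∈ U_2 where f(y) ∈ K⟨y⟩ is not a constant (f ∉ K·1). Then the centralizer of φ in U_2 is C_{U_2}(φ) = { (x + h(y), y) : h(y) ∈ K⟨y⟩ }, i.e. it consists exactly of the unitriangular automorphisms fixing y. -/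
/- STATEMENT 5: for φ = (x + f(y), y) ∈ U₂ with f ∈ K⟨y⟩ non-constant (f ∉ K·1),
   the centralizer of φ in U₂ is exactly the set of unitriangular automorphisms
   fixing y (i.e. of the form (x + h(y), y)).  Here x = ι K 0, y = ι K 1. -/

noncomputable section
open FreeAlgebra

/-!
Write `φ = (x + f(y), y)` and `ψ = (x + h(y), y + b)`. Both automorphisms fix or translate `y`,
so `ψφ` and `φψ` always agree on `y`, while on `x` they give `x + h + f(y + b)` and
`x + f + h(y)`. Hence `ψ` commutes with `φ` iff `f(y + b) = f(y)` in `K⟨y⟩ ≅ K[X]`, and a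
non-constant polynomial in characteristic zero is invariant under the translation by `b` only
when `b = 0`: otherwise `f - f(0)` would vanish at all the distinct points `n b`.
-/

open Polynomial

namespace Polynomial

variable {R : Type*} [CommRing R] [IsDomain R] [CharZero R]

theorem eq_zero_of_comp_X_add_C_eq_self {p : R[X]} {b : R} (hp : 0 < p.natDegree)
    (h : p.comp (X + C b) = p) : b = 0 := by
  by_contra hb
  have hstep : ∀ t, p.eval (t + b) = p.eval t := fun t => by
    simpa using congrArg (eval t) h
  have heval : ∀ n : ℕ, p.eval (n * b) = p.eval 0 := by
    intro n
    induction n with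
    | zero => simp
    | succ n ih => rw [Nat.cast_succ, add_one_mul, hstep, ih]
  have hconst : p - C (p.eval 0) = 0 := by
    refine eq_zero_of_infinite_isRoot _ (Set.infinite_of_injective_forall_mem
      (f := fun n : ℕ => (n : R) * b) (fun m n hmn => ?_) (fun n => by simp [heval]))
    exact_mod_cast mul_right_cancel₀ hb hmn
  rw [sub_eq_zero.mp hconst, natDegree_C] at hp
  exact hp.false

theorem comp_X_add_C_eq_self_iff {p : R[X]} {b : R} (hp : 0 < p.natDegree) :
    p.comp (X + C b) = p ↔ b = 0 :=
  ⟨eq_zero_of_comp_X_add_C_eq_self hp, by rintro rfl; simp⟩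

end Polynomial

theorem Polynomial.aeval_add_algebraMap {R A : Type*} [CommSemiring R] [Semiring A] [Algebra R A]
    (x : A) (b : R) (p : R[X]) :
    aeval (x + algebraMap R A b) p = aeval x (p.comp (X + C b)) := by
  simp [aeval_comp]

namespace FreeAlgebra

variable {R : Type*} [CommRing R]

theorem aeval_ι_injective {σ : Type*} [DecidableEq σ] (i : σ) :
    Function.Injective (aeval (ι R i) : R[X] → FreeAlgebra R σ) := by
  have hretract : (lift R (Pi.single i X)).comp (aeval (ι R i)) = AlgHom.id R R[X] :=
    algHom_ext (by simp)
  exact Function.LeftInverse.injective (g := lift R (Pi.single i X))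
    fun p => DFunLike.congr_fun hretract p

theorem mul_eq_mul_iff_of_fin_two {φ ψ : FreeAlgebra R (Fin 2) ≃ₐ[R] FreeAlgebra R (Fin 2)} :
    ψ * φ = φ * ψ ↔ ∀ i, ψ (φ (ι R i)) = φ (ψ (ι R i)) := by
  refine ⟨fun h i => DFunLike.congr_fun h (ι R i), fun h => ?_⟩
  exact AlgEquiv.coe_toAlgHom_injective (hom_ext (funext h))

theorem mul_eq_mul_iff_of_translations {φ ψ : FreeAlgebra R (Fin 2) ≃ₐ[R] FreeAlgebra R (Fin 2)}
    {f h : FreeAlgebra R (Fin 2)} {a b : R}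
    (hφx : φ (ι R 0) = ι R 0 + f) (hφy : φ (ι R 1) = ι R 1 + algebraMap R _ a)
    (hψx : ψ (ι R 0) = ι R 0 + h) (hψy : ψ (ι R 1) = ι R 1 + algebraMap R _ b) :
    ψ * φ = φ * ψ ↔ ψ f + h = φ h + f := by
  rw [mul_eq_mul_iff_of_fin_two, Fin.forall_fin_two, hφx, hψx, hφy, hψy, map_add, map_add,
    map_add, map_add, hφx, hψx, hφy, hψy, AlgEquiv.commutes, AlgEquiv.commutes,
    add_right_comm (ι R 1), and_iff_left rfl, add_assoc, add_assoc, add_right_inj,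
    add_comm h, add_comm f]

end FreeAlgebra

theorem centralizer_of_nonconstant (K : Type) [Field K] [CharZero K]
    (φ : A2 K ≃ₐ[K] A2 K) (f : A2 K)
    (hf : f ∈ Algebra.adjoin K ({ι K 1} : Set (A2 K)))
    (hfnc : ∀ a : K, f ≠ algebraMap K (A2 K) a)
    (hφx : φ (ι K 0) = ι K 0 + f) (hφy : φ (ι K 1) = ι K 1) :
    ∀ ψ : A2 K ≃ₐ[K] A2 K, IsU2 K ψ →
      (ψ * φ = φ * ψ ↔ ψ (ι K 1) = ι K 1) := by
  rintro ψ ⟨h, hh, b, hψx, hψy⟩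
  rw [Algebra.adjoin_singleton_eq_range_aeval, AlgHom.mem_range] at hf hh
  obtain ⟨p, rfl⟩ := hf
  obtain ⟨q, rfl⟩ := hh
  have hp : 0 < p.natDegree := Nat.pos_of_ne_zero fun h0 =>
    hfnc (p.coeff 0) (by rw [eq_C_of_natDegree_eq_zero h0, aeval_C, coeff_C_zero])
  have hφq : φ (aeval (ι K 1) q) = aeval (ι K 1) q := by rw [← aeval_algHom_apply, hφy]
  have hψp : ψ (aeval (ι K 1) p) = aeval (ι K 1) (p.comp (X + C b)) := by
    rw [← aeval_algHom_apply, hψy, aeval_add_algebraMap]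
  have hφy' : φ (ι K 1) = ι K 1 + algebraMap K _ 0 := by rw [hφy, map_zero, add_zero]
  rw [mul_eq_mul_iff_of_translations hφx hφy' hψx hψy, hφq, hψp, add_comm, add_left_cancel_iff,
    (aeval_ι_injective 1).eq_iff, comp_X_add_C_eq_self_iff hp, hψy, add_eq_left,
    algebraMap_eq_zero_iff]
end
end

section
/- Let φ = (x, y + b) ∈ U_2 with b ∈ K, b ≠ 0. Then the centralizer of φ in U_2 is C_{U_2}(φ) = { (x + a, y + c) : a, c ∈ K }, i.e. it consists exactly of the unitriangular automorphisms sending x ↦ x + a·1 and y ↦ y + c·1 for constants a, c ∈ K. -/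
/- STATEMENT 6: for φ = (x, y + b) ∈ U₂ with b ∈ K, b ≠ 0, the centralizer of φ in U₂
   is exactly { (x + a, y + c) : a, c ∈ K }.  Here x = ι K 0, y = ι K 1. -/

noncomputable section
open FreeAlgebra

open Polynomial

/-- `aeval y : K[X] → A2 K` is injective. -/
lemma aeval_y_injective (K : Type) [Field K] :
    Function.Injective (Polynomial.aeval (ι K (1 : Fin 2)) : K[X] →ₐ[K] A2 K) := by
  have : Function.LeftInverse
      (FreeAlgebra.lift K (fun i : Fin 2 => if i = 1 then (X : K[X]) else 0))
      (Polynomial.aeval (ι K (1 : Fin 2))) := by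
    intro p
    have h : ((FreeAlgebra.lift K (fun i : Fin 2 => if i = 1 then (X : K[X]) else 0)).comp
        (Polynomial.aeval (ι K (1 : Fin 2)))) = AlgHom.id K K[X] := by
      apply Polynomial.algHom_ext
      simp
    exact congrArg (fun f => f p) h
  exact this.injective

/-- In characteristic zero, a polynomial fixed by a nonzero shift is constant. -/
lemma const_of_shift (K : Type) [Field K] [CharZero K] (b : K) (hb : b ≠ 0)
    (p : K[X]) (h : p.comp (X + C b) = p) : p = C (p.eval 0) := by
  have key : ∀ n : ℕ, p.eval ((n : K) * b) = p.eval 0 := by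
    intro n
    induction n with
    | zero => simp
    | succ n ih =>
      have := congrArg (fun q => q.eval ((n : K) * b)) h
      simp only [Polynomial.eval_comp, Polynomial.eval_add, Polynomial.eval_X,
        Polynomial.eval_C] at this
      rw [← ih, ← this]
      push_cast; ring_nf
  by_contra hne
  have hq : p - C (p.eval 0) ≠ 0 := fun h0 => hne (by linear_combination (norm := module) h0)
  have hinf : Set.Infinite { x | (p - C (p.eval 0)).IsRoot x } := by
    apply Set.infinite_of_injective_forall_mem
      (f := fun n : ℕ => (n : K) * b)
      (fun m n hmn => Nat.cast_injective (mul_right_cancel₀ hb hmn))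
    intro n
    simp [Polynomial.IsRoot, key n]
  exact hq (Polynomial.eq_zero_of_infinite_isRoot _ hinf)

theorem centralizer_of_translation (K : Type) [Field K] [CharZero K]
    (φ : A2 K ≃ₐ[K] A2 K) (b : K) (hb : b ≠ 0)
    (hφx : φ (ι K 0) = ι K 0)
    (hφy : φ (ι K 1) = ι K 1 + algebraMap K (A2 K) b) :
    ∀ ψ : A2 K ≃ₐ[K] A2 K, IsU2 K ψ →
      (ψ * φ = φ * ψ ↔ ∃ a c : K,
        ψ (ι K 0) = ι K 0 + algebraMap K (A2 K) a ∧
        ψ (ι K 1) = ι K 1 + algebraMap K (A2 K) c) := by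
  intro ψ hψ
  obtain ⟨f, hf, c, hψx, hψy⟩ := hψ
  rw [Algebra.adjoin_singleton_eq_range_aeval, AlgHom.mem_range] at hf
  obtain ⟨p, hp⟩ := hf
  constructor
  · intro hcomm
    have h0 : ψ (φ (ι K 0)) = φ (ψ (ι K 0)) := by
      have := congrArg (fun e : A2 K ≃ₐ[K] A2 K => e (ι K 0)) hcomm
      simpa using this
    rw [hφx, hψx] at h0
    have hfix : f = φ f := by
      have := h0
      rw [map_add, hφx] at this
      exact (add_right_injective _ this : _)
    have hφf : φ f = Polynomial.aeval (ι K (1:Fin 2)) (p.comp (X + C b)) := by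
      have h1 : φ (Polynomial.aeval (ι K (1:Fin 2)) p) = Polynomial.aeval (φ (ι K 1)) p :=
        (Polynomial.aeval_algHom_apply φ _ p).symm
      rw [← hp, h1, hφy, Polynomial.aeval_comp]
      simp
    have hpc : p.comp (X + C b) = p := by
      apply aeval_y_injective K
      rw [← hφf, ← hfix, hp]
    have hpC := const_of_shift K b hb p hpc
    refine ⟨p.eval 0, c, ?_, hψy⟩
    rw [hψx, ← hp, hpC]
    simp
  · rintro ⟨a, c', hx, hy⟩
    have : (ψ * φ).toAlgHom = (φ * ψ).toAlgHom := by
      apply FreeAlgebra.hom_ext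
      funext i
      fin_cases i
      · show (ψ * φ) (ι K 0) = (φ * ψ) (ι K 0)
        show ψ (φ (ι K 0)) = φ (ψ (ι K 0))
        rw [hφx, hx, map_add, hφx, AlgEquiv.commutes]
      · show ψ (φ (ι K 1)) = φ (ψ (ι K 1))
        rw [hφy, map_add, hy, map_add, hφy, AlgEquiv.commutes, AlgEquiv.commutes]
        abel
    ext z
    exact AlgHom.congr_fun this z
end
end

section
/- For every n ≥ 2, the group Aut A_n of K-algebra automorphisms of the free associative algebra A_n = K⟨x_1,…,x_n⟩ over a field K of characteristic zero is not linear: for every field F and every natural number m there is no injective group homomorphism from Aut A_n into GL_m(F). -/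
/-!
The elementary automorphisms `x_j ↦ x_j + q(x_i)` form a copy of `(K[X], +)` in `Aut A_n`,
normalised by the shift `x_i ↦ x_i + 1`, which acts on it by `q ↦ q(X + 1)`. Under an embedding
into `GL_m(F)`, the images `W q` generate a finite-dimensional commutative algebra `A`, and
conjugation by the shift is an automorphism `φ` of `A`. Some power `φ ^ Q` is the identity modulo
the nilradical `N`, as `A` has finitely many primes `P` and finitely many algebra maps into each
domain `A ⧸ P`. Modulo `N ^ (i + 2)`, the map `q ↦ W q - 1` turns the forward difference
`q ↦ q(X + Q) - q` into `φ ^ Q - 1` on a finite-dimensional space, so a power of it bounded by that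
dimension pushes `W q - 1` from `N ^ (i + 1)` into `N ^ (i + 2)`. As `N` is nilpotent, a fixed power
of the forward difference would kill every polynomial, which fails for `X ^ c` in characteristic
zero.
-/

noncomputable section

open Polynomial Multiplicative fwdDiff

lemma fwdDiff_iter_comp_mul {R G : Type*} [Semiring R] [AddCommGroup G] (t : R) (k : ℕ)
    (f : R → G) : (fun y ↦ (Δ_[t])^[k] f (t * y)) = (Δ_[1])^[k] (fun y ↦ f (t * y)) := by
  have : Function.Semiconj (fun f : R → G ↦ fun y ↦ f (t * y)) (Δ_[t]) (Δ_[1]) := fun f ↦ by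
    ext y
    simp [fwdDiff, mul_add]
  exact (this.iterate_right k) f

namespace Polynomial

variable {K : Type*} [Field K]

def taylorSubOne (t : K) : AddMonoid.End K[X] :=
  (taylor t).toAddMonoidHom - AddMonoidHom.id K[X]

lemma taylorSubOne_apply (t : K) (p : K[X]) : taylorSubOne t p = taylor t p - p := rfl

lemma eval_taylorSubOne_pow (t : K) (k : ℕ) (p : K[X]) :
    ((taylorSubOne t ^ k) p).eval = (Δ_[t])^[k] p.eval := by
  have : Function.Semiconj (fun p : K[X] ↦ p.eval) (taylorSubOne t) (Δ_[t]) := fun p ↦ by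
    ext x
    simp [taylorSubOne_apply, fwdDiff, taylor_eval]
  rw [AddMonoid.End.coe_pow]
  exact (this.iterate_right k) p

variable [CharZero K]

lemma taylorSubOne_pow_natDegree_succ (t : K) (p : K[X]) :
    (taylorSubOne t ^ (p.natDegree + 1)) p = 0 := by
  rcases eq_or_ne t 0 with rfl | ht
  · have : taylorSubOne (0 : K) = 0 := by ext q : 1; simp [taylorSubOne_apply]
    simp [this]
  refine Polynomial.funext fun x ↦ ?_
  have hdeg : (p.comp (C t * X)).natDegree < p.natDegree + 1 :=
    (natDegree_comp_le.trans (by simp [natDegree_C_mul_X _ ht])).trans_lt (Nat.lt_succ_self _)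
  have h := congrFun (fwdDiff_iter_comp_mul t (p.natDegree + 1) p.eval) (x / t)
  simp only [mul_div_cancel₀ x ht, ← eval_taylorSubOne_pow] at h
  rw [h, eval_zero]
  simpa using congrFun (fwdDiff_iter_eq_zero_of_degree_lt hdeg) (x / t)

lemma not_isNilpotent_taylorSubOne {t : K} (ht : t ≠ 0) : ¬ IsNilpotent (taylorSubOne t) := by
  rintro ⟨c, hc⟩
  have h := congrFun (fwdDiff_iter_comp_mul t c (X ^ c : K[X]).eval) 1
  have hpow : (fun y ↦ (X ^ c : K[X]).eval (t * y)) = t ^ c • fun y ↦ y ^ c := by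
    ext y
    simp [mul_pow]
  rw [← eval_taylorSubOne_pow, hc, hpow, fwdDiff_iter_const_smul, fwdDiff_iter_eq_factorial] at h
  simp [ht, Nat.factorial_ne_zero] at h

end Polynomial

theorem AlgEquiv.exists_pow_sub_mem_nilradical {F A : Type*} [Field F] [CommRing A] [Algebra F A]
    [FiniteDimensional F A] (φ : A ≃ₐ[F] A) :
    ∃ Q, 0 < Q ∧ ∀ x, (φ ^ Q) x - x ∈ nilradical A := by
  have : IsArtinianRing A := IsArtinianRing.of_finite F A
  let reduce (k : ℕ) (P : PrimeSpectrum A) : A →ₐ[F] A ⧸ P.asIdeal :=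
    (Ideal.Quotient.mkₐ F P.asIdeal).comp (φ ^ k).toAlgHom
  obtain ⟨j, k, hjk, hreduce⟩ :=
    Set.finite_univ.exists_lt_map_eq_of_forall_mem (f := reduce) fun _ ↦ Set.mem_univ _
  refine ⟨k - j, Nat.sub_pos_of_lt hjk, fun x ↦ ?_⟩
  rw [PrimeSpectrum.nilradical_eq_iInf, Submodule.mem_iInf]
  intro P
  obtain ⟨y, rfl⟩ := (φ ^ j).surjective x
  have h := AlgHom.congr_fun (congrFun hreduce P) y
  simp only [reduce, AlgHom.comp_apply, Ideal.Quotient.mkₐ_eq_mk] at h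
  rw [← AlgEquiv.mul_apply, pow_sub_mul_pow φ hjk.le, ← Ideal.Quotient.eq]
  exact h.symm

lemma nilradical_pow_le_comap {R S G : Type*} [CommSemiring R] [CommSemiring S] [FunLike G R S]
    [RingHomClass G R S] (f : G) (j : ℕ) : nilradical R ^ j ≤ (nilradical S ^ j).comap f := by
  refine (Ideal.pow_right_mono ?_ j).trans (Ideal.le_comap_pow f j)
  exact fun x hx ↦ Ideal.mem_comap.mpr (mem_nilradical.mpr ((mem_nilradical.mp hx).map f))

section Filtration

variable {F A M : Type*} [Field F] [CommRing A] [Algebra F A] [AddCommGroup M]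
  (W : Multiplicative M →* A) (S : AddMonoid.End M) (τ : A →ₐ[F] A)

lemma Ideal.Quotient.mk_map_ofAdd_add_sub {I J : Ideal A} (hIJ : I * I ≤ J) {a b : M}
    (ha : W (ofAdd a) - 1 ∈ I) (hb : W (ofAdd b) - 1 ∈ I) :
    mk J (W (ofAdd (a + b)) - W (ofAdd a)) = mk J (W (ofAdd b) - 1) := by
  rw [Ideal.Quotient.eq]
  have : W (ofAdd (a + b)) - W (ofAdd a) - (W (ofAdd b) - 1) =
      (W (ofAdd a) - 1) * (W (ofAdd b) - 1) := by
    rw [ofAdd_add, map_mul]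
    ring
  exact this ▸ hIJ (Ideal.mul_mem_mul ha hb)

variable [FiniteDimensional F A]

lemma exists_forall_map_pow_sub_one_mem_of_mul_le {I J : Ideal A} (hIJ : I * I ≤ J)
    (hJ : J ≤ J.comap τ) (hτ : ∀ p, τ (W (ofAdd p)) = W (ofAdd (S p)))
    (hS : ∀ p, ∃ k : ℕ, ((S - 1) ^ k) p = 0) {c : ℕ}
    (hc : ∀ p, W (ofAdd (((S - 1) ^ c) p)) - 1 ∈ I) :
    ∃ c' : ℕ, ∀ p, W (ofAdd (((S - 1) ^ c') p)) - 1 ∈ J := by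
  have : FiniteDimensional F (A ⧸ J) :=
    Module.Finite.of_surjective (Ideal.Quotient.mkₐ F J).toLinearMap
      (Ideal.Quotient.mkₐ_surjective F J)
  let g : Module.End F (A ⧸ J) := (Ideal.quotientMapₐ J τ hJ).toLinearMap - 1
  let ξ (p : M) : A ⧸ J := Ideal.Quotient.mk J (W (ofAdd (((S - 1) ^ c) p)) - 1)
  have hg (p : M) : g (ξ p) = ξ ((S - 1) p) := by
    have hsplit : S (((S - 1) ^ c) p) = ((S - 1) ^ c) p + ((S - 1) ^ c) ((S - 1) p) := by
      have : ((S - 1) ^ c) ((S - 1) p) = (S - 1) (((S - 1) ^ c) p) := by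
        simp only [AddMonoid.End.coe_pow, ← Function.iterate_succ_apply,
          Function.iterate_succ_apply']
      rw [this, show ∀ x, (S - 1) x = S x - x from fun _ ↦ rfl]
      abel
    change Ideal.Quotient.mk J (τ (W (ofAdd (((S - 1) ^ c) p)) - 1)) - ξ p = _
    rw [map_sub, map_one, hτ, ← map_sub, sub_sub_sub_cancel_right, hsplit]
    exact Ideal.Quotient.mk_map_ofAdd_add_sub W hIJ (hc p) (hc _)
  have hgk (k : ℕ) (p : M) : (g ^ k) (ξ p) = ξ (((S - 1) ^ k) p) := by
    induction k generalizing p with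
    | zero => rfl
    | succ k ih =>
      rw [pow_succ, Module.End.mul_apply, hg, ih]
      simp only [AddMonoid.End.coe_pow, Function.iterate_succ_apply]
  refine ⟨c + Module.finrank F (A ⧸ J), fun p ↦ ?_⟩
  obtain ⟨k, hk⟩ := hS p
  have hker : ξ p ∈ LinearMap.ker (g ^ k) := by
    rw [LinearMap.mem_ker, hgk, hk]
    simp [ξ]
  have := Module.End.ker_pow_le_ker_pow_finrank g k hker
  rw [LinearMap.mem_ker, hgk, Ideal.Quotient.eq_zero_iff_mem] at this
  simpa only [AddMonoid.End.coe_pow, Function.iterate_add_apply] using this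

theorem isNilpotent_sub_one_of_injective (hW : Function.Injective W)
    (hτ : ∀ p, τ (W (ofAdd p)) = W (ofAdd (S p))) (hτN : ∀ x, τ x - x ∈ nilradical A)
    (hS : ∀ p, ∃ k : ℕ, ((S - 1) ^ k) p = 0) : IsNilpotent (S - 1) := by
  have hbase (p : M) : W (ofAdd ((S - 1) p)) - 1 ∈ nilradical A := by
    have hinv : W (ofAdd p) * W (ofAdd (-p)) = 1 := by
      rw [← map_mul, ← ofAdd_add, add_neg_cancel, ofAdd_zero, map_one]
    have hdiff : W (ofAdd ((S - 1) p)) = W (ofAdd (S p)) * W (ofAdd (-p)) := by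
      rw [← map_mul, ← ofAdd_add, ← sub_eq_add_neg]
      rfl
    rw [hdiff, ← hτ, ← hinv, ← sub_mul]
    exact Ideal.mul_mem_right _ _ (hτN _)
  have hfilt (i : ℕ) :
      ∃ c : ℕ, ∀ p, W (ofAdd (((S - 1) ^ c) p)) - 1 ∈ nilradical A ^ (i + 1) := by
    induction i with
    | zero => exact ⟨1, by simpa using hbase⟩
    | succ i ih =>
      obtain ⟨c, hc⟩ := ih
      refine exists_forall_map_pow_sub_one_mem_of_mul_le W S τ ?_
        (nilradical_pow_le_comap τ _) hτ hS hc
      rw [← pow_add]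
      exact Ideal.pow_le_pow_right (by omega)
  have : IsArtinianRing A := IsArtinianRing.of_finite F A
  obtain ⟨s, hs⟩ := IsNoetherianRing.isNilpotent_nilradical A
  obtain ⟨c, hc⟩ := hfilt s
  refine ⟨c, ?_⟩
  ext p
  refine hW ?_
  have := Ideal.pow_le_pow_right (Nat.le_succ s) (hc p)
  rwa [hs, Ideal.zero_eq_bot, Ideal.mem_bot, sub_eq_zero, ← map_one W] at this

end Filtration

section Linear

variable {K F : Type*} [Field K] [CharZero K] [Field F]

theorem not_injective_of_conj_eq_taylor {A : Type*} [CommRing A] [Algebra F A]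
    [FiniteDimensional F A] (W : Multiplicative K[X] →* A) (φ : A ≃ₐ[F] A)
    (hφ : ∀ q, φ (W (ofAdd q)) = W (ofAdd (taylor 1 q))) : ¬ Function.Injective W := by
  intro hW
  have hpow (k : ℕ) (q : K[X]) : (φ ^ k) (W (ofAdd q)) = W (ofAdd (taylor (k : K) q)) := by
    induction k generalizing q with
    | zero => simp
    | succ k ih =>
      rw [pow_succ', AlgEquiv.mul_apply, ih, hφ, taylor_taylor, Nat.cast_succ, add_comm]
  obtain ⟨Q, hQ, hQN⟩ := φ.exists_pow_sub_mem_nilradical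
  exact not_isNilpotent_taylorSubOne (Nat.cast_ne_zero.mpr hQ.ne')
    (isNilpotent_sub_one_of_injective W (taylor (Q : K)).toAddMonoidHom (φ ^ Q).toAlgHom hW
      (hpow Q) hQN fun p ↦ ⟨_, taylorSubOne_pow_natDegree_succ _ p⟩)

open scoped IsMulCommutative in
theorem not_injective_of_mul_eq_taylor_mul {B : Type*} [Ring B] [Algebra F B]
    [FiniteDimensional F B] (W : Multiplicative K[X] →* Bˣ) (u : Bˣ)
    (hu : ∀ q, u * W (ofAdd q) = W (ofAdd (taylor 1 q)) * u) : ¬ Function.Injective W := by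
  intro hW
  let gens : Set B := Set.range fun q ↦ (W q : B)
  have hcomm : ∀ a ∈ gens, ∀ b ∈ gens, a * b = b * a := by
    rintro _ ⟨p, rfl⟩ _ ⟨q, rfl⟩
    rw [← Units.val_mul, ← map_mul, mul_comm p, map_mul, Units.val_mul]
  let A := Algebra.adjoin F gens
  have : IsMulCommutative A := Algebra.isMulCommutative_adjoin F hcomm
  let conj : B ≃ₐ[F] B := MulSemiringAction.toAlgEquiv F B (ConjAct.toConjAct u)
  have hconj (q : K[X]) : conj (W (ofAdd q)) = W (ofAdd (taylor 1 q)) := by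
    simp [conj, ConjAct.units_smul_def, ← Units.val_mul, hu]
  have hA : A.map (conj : B →ₐ[F] B) = A := by
    rw [← Algebra.adjoin_image, ← Set.range_comp]
    congr 1
    have hsurj : Function.Surjective fun q : Multiplicative K[X] ↦ ofAdd (taylor 1 q.toAdd) :=
      fun q ↦ ⟨ofAdd (taylor (-1) q.toAdd), by simp [taylor_taylor]⟩
    rw [show gens = _ from (hsurj.range_comp fun q ↦ (W q : B)).symm]
    exact congrArg Set.range (funext fun q ↦ hconj q.toAdd)
  let φ : A ≃ₐ[F] A := (conj.subalgebraMap A).trans (Subalgebra.equivOfEq _ _ hA)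
  let WA : Multiplicative K[X] →* A :=
    ((Units.coeHom B).comp W).codRestrict A fun q ↦ Algebra.subset_adjoin ⟨q, rfl⟩
  refine not_injective_of_conj_eq_taylor WA φ (fun q ↦ Subtype.ext (hconj q)) fun p q h ↦ hW ?_
  exact Units.ext (congrArg Subtype.val h)

end Linear

namespace FreeAlgebra

variable {R σ : Type*} [CommRing R] [DecidableEq σ]

def translateEnd (i : σ) : Multiplicative R →* (FreeAlgebra R σ →ₐ[R] FreeAlgebra R σ) where
  toFun c := lift R (Function.update (ι R) i (ι R i + algebraMap R _ c.toAdd))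
  map_one' := by
    ext k
    by_cases h : k = i <;> simp [h]
  map_mul' c d := by
    ext k
    by_cases h : k = i <;> simp [h, add_assoc]

def elementaryEnd {i j : σ} (hij : i ≠ j) :
    Multiplicative R[X] →* (FreeAlgebra R σ →ₐ[R] FreeAlgebra R σ) where
  toFun q := lift R (Function.update (ι R) j (ι R j + aeval (ι R i) q.toAdd))
  map_one' := by
    ext k
    by_cases h : k = j <;> simp [h]
  map_mul' q r := by
    ext k
    by_cases h : k = j
    · simp [h, add_assoc, ← aeval_algHom_apply, hij]
    · simp [h]

def translate (i : σ) : Multiplicative R →* (FreeAlgebra R σ ≃ₐ[R] FreeAlgebra R σ) :=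
  (AlgEquiv.algHomUnitsEquiv R _).toMonoidHom.comp (translateEnd i).toHomUnits

def elementary {i j : σ} (hij : i ≠ j) :
    Multiplicative R[X] →* (FreeAlgebra R σ ≃ₐ[R] FreeAlgebra R σ) :=
  (AlgEquiv.algHomUnitsEquiv R _).toMonoidHom.comp (elementaryEnd hij).toHomUnits

lemma translate_mul_elementary {i j : σ} (hij : i ≠ j) (q : R[X]) :
    translate i (ofAdd 1) * elementary hij (ofAdd q) =
      elementary hij (ofAdd (taylor 1 q)) * translate i (ofAdd 1) := by
  simp only [translate, elementary, MonoidHom.comp_apply, ← map_mul]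
  congr 1
  ext1
  simp only [Units.val_mul, MonoidHom.coe_toHomUnits]
  ext k
  by_cases hkj : k = j
  · subst hkj
    simp [translateEnd, elementaryEnd, hij.symm, ← aeval_algHom_apply, taylor_apply, aeval_comp]
  by_cases hki : k = i
  · subst hki
    simp [translateEnd, elementaryEnd, hij]
  · simp [translateEnd, elementaryEnd, hkj, hki]

lemma elementary_injective {i j : σ} (hij : i ≠ j) :
    Function.Injective (elementary (R := R) hij) := by
  refine (injective_iff_map_eq_one _).mpr fun q hq ↦ ?_
  have h : elementaryEnd hij q (ι R j) = ι R j := DFunLike.congr_fun hq (ι R j)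
  simp only [elementaryEnd, MonoidHom.coe_mk, OneHom.coe_mk, lift_ι_apply, Function.update_self,
    add_eq_left] at h
  simpa [← aeval_algHom_apply] using congrArg (lift R (Pi.single i (X : R[X]))) h

end FreeAlgebra

theorem Aut_free_algebra_not_linear (K : Type) [Field K] [CharZero K]
    (n : ℕ) (hn : 2 ≤ n) (F : Type) [Field F] (m : ℕ)
    (ρ : (FreeAlgebra K (Fin n) ≃ₐ[K] FreeAlgebra K (Fin n)) →*
          Matrix.GeneralLinearGroup (Fin m) F) :
    ¬ Function.Injective ρ := by
  intro hρ
  obtain ⟨i, j, hij⟩ : ∃ i j : Fin n, i ≠ j := ⟨⟨0, by omega⟩, ⟨1, by omega⟩, by simp⟩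
  refine not_injective_of_mul_eq_taylor_mul (F := F) (ρ.comp (FreeAlgebra.elementary hij))
    (ρ (FreeAlgebra.translate i (ofAdd 1))) (fun q ↦ ?_)
    (hρ.comp (FreeAlgebra.elementary_injective hij))
  simp only [MonoidHom.comp_apply, ← map_mul, FreeAlgebra.translate_mul_elementary]
end
end

section
/- The center of the group U_3 of unitriangular automorphisms of A_3 = K⟨x_1,x_2,x_3⟩ is Z(U_3) = { (x_1 + f_1, x_2, x_3) : f_1 = f_1(x_2,x_3) ∈ S }, i.e. it consists exactly of the automorphisms fixing x_2 and x_3 and sending x_1 ↦ x_1 + f_1 with f_1 in the invariant subalgebra S. -/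
/- STATEMENT 14: the center of the group U₃ of unitriangular automorphisms of
   A₃ = K⟨x₁,x₂,x₃⟩ (x₁ = ι K 0, x₂ = ι K 1, x₃ = ι K 2) is
   Z(U₃) = { (x₁ + f₁, x₂, x₃) : f₁ ∈ S }, where S is the subalgebra of K⟨x₂,x₃⟩ of
   elements invariant under every substitution x₂ ↦ x₂ + g(x₃), x₃ ↦ x₃ + h·1. -/

noncomputable section
open FreeAlgebra

abbrev A3 (K : Type) [Field K] := FreeAlgebra K (Fin 3)

/-- φ is a unitriangular automorphism of A₃ = K⟨x₁,x₂,x₃⟩: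
x₁ ↦ x₁ + f₁(x₂,x₃), x₂ ↦ x₂ + f₂(x₃), x₃ ↦ x₃ + f₃·1. -/
def IsU3 (K : Type) [Field K] (φ : A3 K ≃ₐ[K] A3 K) : Prop :=
  ∃ f1 ∈ Algebra.adjoin K ({ι K 1, ι K 2} : Set (A3 K)),
  ∃ f2 ∈ Algebra.adjoin K ({ι K 2} : Set (A3 K)), ∃ f3 : K,
    φ (ι K 0) = ι K 0 + f1 ∧ φ (ι K 1) = ι K 1 + f2 ∧
    φ (ι K 2) = ι K 2 + algebraMap K (A3 K) f3

/-- S : the elements of K⟨x₂,x₃⟩ invariant under all substitutions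
x₂ ↦ x₂ + g(x₃), x₃ ↦ x₃ + h·1 (g ∈ K⟨x₃⟩, h ∈ K). -/
def Sinv (K : Type) [Field K] : Set (A3 K) :=
  {f | f ∈ Algebra.adjoin K ({ι K 1, ι K 2} : Set (A3 K)) ∧
    ∀ g ∈ Algebra.adjoin K ({ι K 2} : Set (A3 K)), ∀ h : K,
      (FreeAlgebra.lift K ![ι K 0, ι K 1 + g, ι K 2 + algebraMap K (A3 K) h]) f = f}

section Helpers
variable {K : Type} [Field K]

lemma eqOn_adjoin {s : Set (A3 K)} {F G : A3 K →ₐ[K] A3 K}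
    (h : ∀ x ∈ s, F x = G x) {a : A3 K} (ha : a ∈ Algebra.adjoin K s) : F a = G a := by
  induction ha using Algebra.adjoin_induction with
  | mem x hx => exact h x hx
  | algebraMap r => simp
  | add x y _ _ hx hy => rw [map_add, map_add, hx, hy]
  | mul x y _ _ hx hy => rw [map_mul, map_mul, hx, hy]

lemma fix_adjoin' {s : Set (A3 K)} (F : A3 K ≃ₐ[K] A3 K) (h : ∀ x ∈ s, F x = x)
    {a} (ha : a ∈ Algebra.adjoin K s) : F a = a := by
  have := eqOn_adjoin (F := F.toAlgHom) (G := AlgHom.id K (A3 K)) (by simpa using h) ha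
  simpa using this

lemma agree_adjoin {s : Set (A3 K)} (F : A3 K ≃ₐ[K] A3 K) (G : A3 K →ₐ[K] A3 K)
    (h : ∀ x ∈ s, F x = G x) {a} (ha : a ∈ Algebra.adjoin K s) : F a = G a := by
  have := eqOn_adjoin (F := F.toAlgHom) (G := G) (by simpa using h) ha
  simpa using this

def mkAut (v w : Fin 3 → A3 K)
    (h1 : ∀ i, (lift K v) (w i) = ι K i)
    (h2 : ∀ i, (lift K w) (v i) = ι K i) : A3 K ≃ₐ[K] A3 K :=
  AlgEquiv.ofAlgHom (lift K v) (lift K w)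
    (FreeAlgebra.hom_ext (funext fun i => by simp [lift_ι_apply, h1 i]))
    (FreeAlgebra.hom_ext (funext fun i => by simp [lift_ι_apply, h2 i]))

@[simp] lemma mkAut_apply (v w : Fin 3 → A3 K) (h1 h2) (x : A3 K) :
    mkAut v w h1 h2 x = lift K v x := rfl

example : (lift K ![ι K 0, ι K 1, ι K 2 + 1]) (ι K 2) = ι K 2 + 1 := by simp
example : Function.Injective (algebraMap K (A3 K)) := RingHom.injective _

def sigmaAut : A3 K ≃ₐ[K] A3 K :=
  mkAut ![ι K 0 + ι K 1, ι K 1, ι K 2] ![ι K 0 - ι K 1, ι K 1, ι K 2]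
    (by intro i; fin_cases i <;> simp)
    (by intro i; fin_cases i <;> simp)

def psiAut (g : A3 K) (hg : g ∈ Algebra.adjoin K ({ι K 2} : Set (A3 K))) (h : K) :
    A3 K ≃ₐ[K] A3 K :=
  mkAut ![ι K 0, ι K 1 + g, ι K 2 + algebraMap K (A3 K) h]
        ![ι K 0, ι K 1 - (lift K ![ι K 0, ι K 1, ι K 2 - algebraMap K (A3 K) h]) g,
          ι K 2 - algebraMap K (A3 K) h]
    (by
      intro i
      have key : (lift K ![ι K 0, ι K 1 + g, ι K 2 + algebraMap K (A3 K) h])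
          ((lift K ![ι K 0, ι K 1, ι K 2 - algebraMap K (A3 K) h]) g) = g := by
        have := eqOn_adjoin
          (F := ((lift K ![ι K 0, ι K 1 + g, ι K 2 + algebraMap K (A3 K) h]).comp
            (lift K ![ι K 0, ι K 1, ι K 2 - algebraMap K (A3 K) h])))
          (G := AlgHom.id K (A3 K)) (s := {ι K 2}) (by intro x hx; simp at hx; subst hx; simp) hg
        simpa using this
      fin_cases i <;> simp [key])
    (by
      intro i
      have key : (lift K ![ι K 0,
            ι K 1 - (lift K ![ι K 0, ι K 1, ι K 2 - algebraMap K (A3 K) h]) g,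
            ι K 2 - algebraMap K (A3 K) h]) g
          = (lift K ![ι K 0, ι K 1, ι K 2 - algebraMap K (A3 K) h]) g := by
        refine eqOn_adjoin (s := {ι K 2}) ?_ hg
        intro x hx; simp at hx; subst hx; simp
      fin_cases i <;> simp [key])


lemma psiAut_apply (g : A3 K) (hg : g ∈ Algebra.adjoin K ({ι K 2} : Set (A3 K))) (h : K)
    (x : A3 K) :
    psiAut g hg h x = (lift K ![ι K 0, ι K 1 + g, ι K 2 + algebraMap K (A3 K) h]) x := rfl

@[simp] lemma sigma_ι0 : sigmaAut (K := K) (ι K 0) = ι K 0 + ι K 1 := by simp [sigmaAut]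
@[simp] lemma sigma_ι1 : sigmaAut (K := K) (ι K 1) = ι K 1 := by simp [sigmaAut]
@[simp] lemma sigma_ι2 : sigmaAut (K := K) (ι K 2) = ι K 2 := by simp [sigmaAut]
@[simp] lemma psi_ι0 (g hg h) : psiAut (K := K) g hg h (ι K 0) = ι K 0 := by
  simp [psiAut_apply]
@[simp] lemma psi_ι1 (g hg h) : psiAut (K := K) g hg h (ι K 1) = ι K 1 + g := by
  simp [psiAut_apply]
@[simp] lemma psi_ι2 (g hg h) :
    psiAut (K := K) g hg h (ι K 2) = ι K 2 + algebraMap K (A3 K) h := by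
  simp [psiAut_apply]

end Helpers

section Helpers2
variable {K : Type} [Field K]

lemma sigma_isU3 : IsU3 K sigmaAut :=
  ⟨ι K 1, Algebra.subset_adjoin (by simp), 0, zero_mem _, 0, by simp⟩

lemma psi_isU3 (g hg h) : IsU3 K (psiAut g hg h) :=
  ⟨0, zero_mem _, g, hg, h, by simp⟩

end Helpers2

theorem center_U3 (K : Type) [Field K] [CharZero K] (φ : A3 K ≃ₐ[K] A3 K) :
    (IsU3 K φ ∧ ∀ ψ : A3 K ≃ₐ[K] A3 K, IsU3 K ψ → φ * ψ = ψ * φ) ↔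
    ∃ f1 ∈ Sinv K, φ (ι K 0) = ι K 0 + f1 ∧ φ (ι K 1) = ι K 1 ∧ φ (ι K 2) = ι K 2 := by
  constructor
  · rintro ⟨⟨f1, hf1, f2, hf2, f3, e0, e1, e2⟩, H⟩
    have hσf1 : sigmaAut (K := K) f1 = f1 :=
      fix_adjoin' _ (by intro x hx; simp at hx; rcases hx with rfl | rfl <;> simp) hf1
    have hf2z : f2 = 0 := by
      have h' := DFunLike.congr_fun (H sigmaAut sigma_isU3) (ι K 0)
      simp only [AlgEquiv.mul_apply] at h'
      have eσ : (ι K 0 + f1) + (ι K 1 + f2) = ι K 0 + ι K 1 + f1 := by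
        calc (ι K 0 + f1) + (ι K 1 + f2) = φ (sigmaAut (ι K 0)) := by
              rw [sigma_ι0, map_add, e0, e1]
          _ = sigmaAut (φ (ι K 0)) := h'
          _ = ι K 0 + ι K 1 + f1 := by rw [e0, map_add, sigma_ι0, hσf1]
      have key : f2 = (ι K 0 + f1 + (ι K 1 + f2)) - (ι K 0 + ι K 1 + f1) := by abel
      rw [eσ, sub_self] at key
      exact key
    have hmem2 : (ι K 2 : A3 K) ∈ Algebra.adjoin K ({ι K 2} : Set (A3 K)) :=
      Algebra.subset_adjoin rfl
    have hf3z : f3 = 0 := by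
      set ψ2 := psiAut (ι K 2) hmem2 (0 : K) with hψdef
      have hψf2 : ψ2 f2 = f2 :=
        fix_adjoin' _ (by intro x hx; simp at hx; subst hx; simp [hψdef]) hf2
      have h' := DFunLike.congr_fun (H ψ2 (psi_isU3 _ _ _)) (ι K 1)
      simp only [AlgEquiv.mul_apply] at h'
      have eψ : (ι K 1 + f2) + (ι K 2 + algebraMap K (A3 K) f3)
          = ι K 1 + ι K 2 + f2 := by
        calc (ι K 1 + f2) + (ι K 2 + algebraMap K (A3 K) f3) = φ (ψ2 (ι K 1)) := by
              rw [hψdef, psi_ι1, map_add, e1, e2]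
          _ = ψ2 (φ (ι K 1)) := h'
          _ = ι K 1 + ι K 2 + f2 := by
              rw [e1, map_add, hψf2, hψdef, psi_ι1]
      have key : algebraMap K (A3 K) f3
          = (ι K 1 + f2 + (ι K 2 + algebraMap K (A3 K) f3)) - (ι K 1 + ι K 2 + f2) := by abel
      rw [eψ, sub_self] at key
      exact RingHom.injective (algebraMap K (A3 K)) (by rw [key, map_zero])
    refine ⟨f1, ⟨hf1, ?_⟩, e0, by rw [e1, hf2z, add_zero], by rw [e2, hf3z, map_zero, add_zero]⟩
    intro g hg h
    have h' := DFunLike.congr_fun (H (psiAut g hg h) (psi_isU3 _ _ _)) (ι K 0)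
    simp only [AlgEquiv.mul_apply] at h'
    have eψ : ι K 0 + f1 = ι K 0 + psiAut g hg h f1 := by
      calc ι K 0 + f1 = φ (psiAut g hg h (ι K 0)) := by rw [psi_ι0, e0]
        _ = psiAut g hg h (φ (ι K 0)) := h'
        _ = ι K 0 + psiAut g hg h f1 := by rw [e0, map_add, psi_ι0]
    have hfix : psiAut g hg h f1 = f1 := (add_left_cancel eψ).symm
    rw [← psiAut_apply g hg h f1]
    exact hfix
  · rintro ⟨f1, ⟨hf1, hinv⟩, e0, e1, e2⟩
    have hfixφ : ∀ a ∈ Algebra.adjoin K ({ι K 1, ι K 2} : Set (A3 K)), φ a = a := by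
      intro a ha
      refine fix_adjoin' φ ?_ ha
      intro x hx; simp at hx
      rcases hx with rfl | rfl
      exacts [e1, e2]
    refine ⟨⟨f1, hf1, 0, zero_mem _, 0, by simpa using e0, by simpa using e1,
      by simpa using e2⟩, ?_⟩
    intro ψ hψ
    obtain ⟨g1, hg1, g2, hg2, g3, p0, p1, p2⟩ := hψ
    have hψf1 : ψ f1 = f1 := by
      have := agree_adjoin ψ (lift K ![ι K 0, ι K 1 + g2, ι K 2 + algebraMap K (A3 K) g3])
        (by intro x hx; simp at hx
            rcases hx with rfl | rfl
            · simp [p1]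
            · simp [p2]) hf1
      rw [this, hinv g2 hg2 g3]
    have key : (φ.toAlgHom.comp ψ.toAlgHom) = (ψ.toAlgHom.comp φ.toAlgHom) := by
      apply FreeAlgebra.hom_ext
      funext i
      fin_cases i
      · show φ (ψ (ι K 0)) = ψ (φ (ι K 0))
        rw [p0, e0, map_add, map_add, e0, p0, hψf1, hfixφ g1 hg1]
        abel
      · show φ (ψ (ι K 1)) = ψ (φ (ι K 1))
        rw [p1, map_add, e1, hfixφ g2 (Algebra.adjoin_mono (Set.subset_insert _ _) hg2), p1]
      · show φ (ψ (ι K 2)) = ψ (φ (ι K 2))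
        rw [p2, map_add, e2, AlgEquiv.commutes, p2]
    exact AlgEquiv.ext fun x => by
      simpa [AlgEquiv.mul_apply] using AlgHom.congr_fun key x
end
end

section
/- Let n ≥ 4. An automorphism φ lies in the center Z(U_n) of the group U_n of unitriangular automorphisms of A_n = K⟨x_1,…,x_n⟩ if and only if φ has the form (x_1 + f(x_2,…,x_n), x_2, …, x_n), fixing x_2,…,x_n and sending x_1 ↦ x_1 + f, where f ∈ K⟨x_2,…,x_n⟩ satisfies f(x_2 + g_2, …, x_n + g_n) = f(x_2,…,x_n) for all g_2 ∈ K⟨x_3,…,x_n⟩, g_3 ∈ K⟨x_4,…,x_n⟩, …, g_{n-1} ∈ K⟨x_n⟩, g_n ∈ K (i.e. f is fixed by every unitriangular substitution in the variables x_2,…,x_n). -/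
/-!
Generators are indexed from `0`, so `x₀ = ι K 0` plays the role of the paper's `x₁` and
`B = K⟨x_j : 0 < j⟩`. Every unitriangular `ψ` maps `B` into itself.

If `φ` is central, commuting with the transvection `x₀ ↦ x₀ + xᵢ` (`i ≠ 0`) forces `φ xᵢ = xᵢ`,
and commuting with any `ψ` fixing `x₀` gives `ψ f = f` for `f = φ x₀ - x₀`.
Conversely such a `φ` is the identity on `B`, so `φψ` and `ψφ` agree on every `xᵢ`, `i ≠ 0`,
and on `x₀` the two sides differ by `ψ f - f`. This vanishes for every unitriangular `ψ`, not
only those fixing `x₀`: if `ψ x₀ = x₀ + g`, then `θψ` with `θ : x₀ ↦ x₀ - g` fixes `x₀` and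
agrees with `ψ` on `B`.
-/

noncomputable section
open FreeAlgebra

/-- φ is a unitriangular automorphism of K⟨x₁,…,xₙ⟩:
xᵢ ↦ xᵢ + fᵢ(x_{i+1},…,xₙ) with fᵢ ∈ K⟨x_{i+1},…,xₙ⟩ (and fₙ ∈ K·1). -/
def IsUn (K : Type) [Field K] (n : ℕ)
    (φ : FreeAlgebra K (Fin n) ≃ₐ[K] FreeAlgebra K (Fin n)) : Prop :=
  ∃ F : Fin n → FreeAlgebra K (Fin n),
    (∀ i, F i ∈ Algebra.adjoin K (FreeAlgebra.ι K '' {j | i < j})) ∧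
    ∀ i, φ (ι K i) = ι K i + F i

namespace FreeAlgebra

section

variable {R X : Type*} [CommSemiring R]

lemma apply_eq_self_of_mem_adjoin {f : FreeAlgebra R X →ₐ[R] FreeAlgebra R X} {s : Set X}
    (hf : ∀ j ∈ s, f (ι R j) = ι R j) {x : FreeAlgebra R X}
    (hx : x ∈ Algebra.adjoin R (ι R '' s)) : f x = x :=
  (AlgHom.eqOn_adjoin_iff (ψ := AlgHom.id R _)).2 (by rintro _ ⟨j, hj, rfl⟩; exact hf j hj) hx

end

variable {R X : Type*} [CommRing R] [DecidableEq X]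

def transvectionHom (i : X) (g : FreeAlgebra R X) : FreeAlgebra R X →ₐ[R] FreeAlgebra R X :=
  lift R (ι R + Pi.single i g)

@[simp]
lemma transvectionHom_ι (i : X) (g : FreeAlgebra R X) (j : X) :
    transvectionHom i g (ι R j) = ι R j + (Pi.single i g : X → FreeAlgebra R X) j := by
  simp [transvectionHom]

lemma transvectionHom_apply_of_mem {i : X} {s : Set X} (hi : i ∉ s) (g : FreeAlgebra R X)
    {x : FreeAlgebra R X} (hx : x ∈ Algebra.adjoin R (ι R '' s)) :
    transvectionHom i g x = x :=
  apply_eq_self_of_mem_adjoin (fun j hj ↦ by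
    simp [Pi.single_eq_of_ne (ne_of_mem_of_not_mem hj hi)]) hx

lemma transvectionHom_zero (i : X) : transvectionHom i (0 : FreeAlgebra R X) = AlgHom.id R _ := by
  ext j
  simp

lemma transvectionHom_comp {i : X} {s : Set X} (hi : i ∉ s) (g : FreeAlgebra R X)
    {h : FreeAlgebra R X} (hh : h ∈ Algebra.adjoin R (ι R '' s)) :
    (transvectionHom i g).comp (transvectionHom i h) = transvectionHom i (g + h) := by
  ext j
  obtain rfl | hj := eq_or_ne j i
  · simp [transvectionHom_apply_of_mem hi g hh, add_assoc]
  · simp [Pi.single_eq_of_ne hj]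

def transvection (i : X) {s : Set X} (hi : i ∉ s) (g : FreeAlgebra R X)
    (hg : g ∈ Algebra.adjoin R (ι R '' s)) : FreeAlgebra R X ≃ₐ[R] FreeAlgebra R X :=
  AlgEquiv.ofAlgHom (transvectionHom i g) (transvectionHom i (-g))
    (by rw [transvectionHom_comp hi g (neg_mem hg), add_neg_cancel, transvectionHom_zero])
    (by rw [transvectionHom_comp hi (-g) hg, neg_add_cancel, transvectionHom_zero])

@[simp]
lemma transvection_apply (i : X) {s : Set X} (hi : i ∉ s) (g : FreeAlgebra R X)
    (hg : g ∈ Algebra.adjoin R (ι R '' s)) (x : FreeAlgebra R X) :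
    transvection i hi g hg x = transvectionHom i g x :=
  rfl

end FreeAlgebra

section Unitriangular

variable {K : Type} [Field K] {n : ℕ}

lemma adjoin_ι_gt_mono {i k : Fin n} (hik : i ≤ k) :
    Algebra.adjoin K (ι K '' {j | k < j}) ≤ Algebra.adjoin K (ι K '' {j | i < j}) :=
  Algebra.adjoin_mono (Set.image_mono fun _ hj ↦ lt_of_le_of_lt hik hj)

lemma IsUn.apply_mem_adjoin {φ : FreeAlgebra K (Fin n) ≃ₐ[K] FreeAlgebra K (Fin n)}
    (hφ : IsUn K n φ) (i : Fin n) {x : FreeAlgebra K (Fin n)}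
    (hx : x ∈ Algebra.adjoin K (ι K '' {j | i < j})) :
    φ x ∈ Algebra.adjoin K (ι K '' {j | i < j}) := by
  obtain ⟨F, hF, hφF⟩ := hφ
  have hgen : ι K '' {j | i < j} ⊆ (Algebra.adjoin K (ι K '' {j | i < j})).comap φ.toAlgHom := by
    rintro _ ⟨k, hk, rfl⟩
    simpa [hφF] using add_mem (Algebra.subset_adjoin (Set.mem_image_of_mem (ι K) hk))
      (adjoin_ι_gt_mono hk.le (hF k))
  exact Algebra.adjoin_le hgen hx

lemma IsUn.mul {φ ψ : FreeAlgebra K (Fin n) ≃ₐ[K] FreeAlgebra K (Fin n)}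
    (hφ : IsUn K n φ) (hψ : IsUn K n ψ) : IsUn K n (φ * ψ) := by
  obtain ⟨F, hF, hφF⟩ := id hφ
  obtain ⟨G, hG, hψG⟩ := hψ
  refine ⟨fun i ↦ F i + φ (G i), fun i ↦ add_mem (hF i) (hφ.apply_mem_adjoin i (hG i)), ?_⟩
  intro i
  rw [AlgEquiv.mul_apply, hψG, map_add, hφF, add_assoc]

variable [NeZero n]

lemma zero_notMem_setOf_pos : (0 : Fin n) ∉ {j : Fin n | 0 < j} :=
  lt_irrefl 0

lemma isUn_of_apply_ι {φ : FreeAlgebra K (Fin n) ≃ₐ[K] FreeAlgebra K (Fin n)}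
    {f : FreeAlgebra K (Fin n)} (hf : f ∈ Algebra.adjoin K (ι K '' {j | 0 < j}))
    (hφ0 : φ (ι K 0) = ι K 0 + f) (hφ : ∀ i ≠ 0, φ (ι K i) = ι K i) : IsUn K n φ := by
  refine ⟨Pi.single 0 f, fun j ↦ ?_, fun j ↦ ?_⟩
  all_goals obtain rfl | hj := eq_or_ne j 0
  · simpa using hf
  · simp [Pi.single_eq_of_ne hj]
  · simpa using hφ0
  · simp [Pi.single_eq_of_ne hj, hφ j hj]

lemma isUn_transvection_zero (g : FreeAlgebra K (Fin n))
    (hg : g ∈ Algebra.adjoin K (ι K '' {j | 0 < j})) :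
    IsUn K n (transvection 0 zero_notMem_setOf_pos g hg) :=
  isUn_of_apply_ι hg (by simp) fun i hi ↦ by simp [Pi.single_eq_of_ne hi]

lemma IsUn.apply_ι_eq_of_forall_commute {φ : FreeAlgebra K (Fin n) ≃ₐ[K] FreeAlgebra K (Fin n)}
    (hφ : IsUn K n φ) (hcomm : ∀ ψ, IsUn K n ψ → φ * ψ = ψ * φ) {i : Fin n} (hi : i ≠ 0) :
    φ (ι K i) = ι K i := by
  obtain ⟨F, hF, hφF⟩ := hφ
  have hxi : ι K i ∈ Algebra.adjoin K (ι K '' {j | 0 < j}) :=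
    Algebra.subset_adjoin (Set.mem_image_of_mem _ (Fin.pos_iff_ne_zero.2 hi))
  have h := DFunLike.congr_fun (hcomm _ (isUn_transvection_zero _ hxi)) (ι K 0)
  simp only [AlgEquiv.mul_apply, transvection_apply, transvectionHom_ι, Pi.single_eq_same,
    map_add, hφF, transvectionHom_apply_of_mem zero_notMem_setOf_pos _ (hF 0)] at h
  have hFi : F i = 0 := by
    rw [← add_eq_left (a := ι K 0 + ι K i + F 0)]
    conv_rhs => rw [← h]
    abel
  rw [hφF, hFi, add_zero]

lemma IsUn.apply_eq_self_of_forall_fix_zero {ψ : FreeAlgebra K (Fin n) ≃ₐ[K] FreeAlgebra K (Fin n)}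
    (hψ : IsUn K n ψ) {f : FreeAlgebra K (Fin n)}
    (hf : f ∈ Algebra.adjoin K (ι K '' {j | 0 < j}))
    (hinv : ∀ χ, IsUn K n χ → χ (ι K 0) = ι K 0 → χ f = f) : ψ f = f := by
  obtain ⟨G, hG, hψG⟩ := id hψ
  have hG0 : -G 0 ∈ Algebra.adjoin K (ι K '' {j | 0 < j}) := neg_mem (hG 0)
  calc ψ f = transvection 0 zero_notMem_setOf_pos (-G 0) hG0 (ψ f) :=
        (transvectionHom_apply_of_mem zero_notMem_setOf_pos _ (hψ.apply_mem_adjoin 0 hf)).symm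
    _ = f := hinv _ ((isUn_transvection_zero _ hG0).mul hψ) (by
        simp [AlgEquiv.mul_apply, hψG, transvectionHom_apply_of_mem zero_notMem_setOf_pos _ (hG 0)])

lemma commute_of_apply_ι {φ ψ : FreeAlgebra K (Fin n) ≃ₐ[K] FreeAlgebra K (Fin n)}
    {f : FreeAlgebra K (Fin n)} (hφ0 : φ (ι K 0) = ι K 0 + f)
    (hφ : ∀ i ≠ 0, φ (ι K i) = ι K i) (hψ : IsUn K n ψ) (hψf : ψ f = f) : φ * ψ = ψ * φ := by
  obtain ⟨G, hG, hψG⟩ := hψ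
  have hφG (j : Fin n) : φ (G j) = G j :=
    apply_eq_self_of_mem_adjoin (f := φ.toAlgHom) (fun k hk ↦ hφ k (ne_of_gt hk))
      (adjoin_ι_gt_mono (Fin.zero_le j) (hG j))
  apply AlgEquiv.coe_toAlgHom_injective
  ext j
  obtain rfl | hj := eq_or_ne j 0
  · simp only [AlgEquiv.coe_toAlgHom, Function.comp_apply, AlgEquiv.mul_apply, hψG, map_add,
      hφ0, hφG, hψf]
    abel
  · simp [hψG, hφ j hj, hφG]

end Unitriangular

theorem center_Un_general (K : Type) [Field K] (m : ℕ)
    (φ : FreeAlgebra K (Fin (m + 4)) ≃ₐ[K] FreeAlgebra K (Fin (m + 4))) :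
    (IsUn K (m + 4) φ ∧
      ∀ ψ : FreeAlgebra K (Fin (m + 4)) ≃ₐ[K] FreeAlgebra K (Fin (m + 4)),
        IsUn K (m + 4) ψ → φ * ψ = ψ * φ) ↔
    ∃ f ∈ Algebra.adjoin K (FreeAlgebra.ι K '' {j : Fin (m + 4) | 0 < j}),
      φ (ι K 0) = ι K 0 + f ∧
      (∀ i : Fin (m + 4), i ≠ 0 → φ (ι K i) = ι K i) ∧
      ∀ ψ : FreeAlgebra K (Fin (m + 4)) ≃ₐ[K] FreeAlgebra K (Fin (m + 4)),
        IsUn K (m + 4) ψ → ψ (ι K 0) = ι K 0 → ψ f = f := by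
  constructor
  · rintro ⟨hφ, hcomm⟩
    obtain ⟨F, hF, hφF⟩ := id hφ
    refine ⟨F 0, hF 0, hφF 0, fun i hi ↦ hφ.apply_ι_eq_of_forall_commute hcomm hi,
      fun ψ hψ hψ0 ↦ ?_⟩
    have h := DFunLike.congr_fun (hcomm ψ hψ) (ι K 0)
    rw [AlgEquiv.mul_apply, AlgEquiv.mul_apply, hψ0, hφF, map_add, hψ0] at h
    exact (add_left_cancel h).symm
  · rintro ⟨f, hf, hφ0, hφ, hinv⟩
    exact ⟨isUn_of_apply_ι hf hφ0 hφ,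
      fun ψ hψ ↦ commute_of_apply_ι hφ0 hφ hψ (hψ.apply_eq_self_of_forall_fix_zero hf hinv)⟩

theorem center_Un (K : Type) [Field K] [CharZero K] (m : ℕ)
    (φ : FreeAlgebra K (Fin (m + 4)) ≃ₐ[K] FreeAlgebra K (Fin (m + 4))) :
    (IsUn K (m + 4) φ ∧
      ∀ ψ : FreeAlgebra K (Fin (m + 4)) ≃ₐ[K] FreeAlgebra K (Fin (m + 4)),
        IsUn K (m + 4) ψ → φ * ψ = ψ * φ) ↔
    ∃ f ∈ Algebra.adjoin K (FreeAlgebra.ι K '' {j : Fin (m + 4) | 0 < j}),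
      φ (ι K 0) = ι K 0 + f ∧
      (∀ i : Fin (m + 4), i ≠ 0 → φ (ι K i) = ι K i) ∧
      ∀ ψ : FreeAlgebra K (Fin (m + 4)) ≃ₐ[K] FreeAlgebra K (Fin (m + 4)),
        IsUn K (m + 4) ψ → ψ (ι K 0) = ι K 0 → ψ f = f :=
  center_Un_general K m φ
end
end
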